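/- Let M > 0, A > 2, and let (a_ℓ)_{ℓ≥1} be nonnegative reals with ∑_{ℓ≥1} a_ℓ/(2M)^ℓ ≤ 1. Define, for k ≥ 1, b_k := k · ∑_{j=0}^{∞} A^{k+j} (√(CT))^{j+1} a_{k+j+1} where CT := 1/(4A²M²). Then ∑_{k≥1} b_k / (8AM)^k ≤ 1; consequently N((b_k)) ≤ 4AM, where N is the GP quasi-norm N((b_k)) = (1/2) inf{ λ>0 : ∑_k b_k/λ^k ≤ 1 }. -/

import Mathlib

open scoped ENNReal

/-- The Gross–Pitaevskii quasi-norm `N((b_k)) = (1/2)·inf{ λ > 0 : ∑_{k≥1} b_k/λ^k ≤ 1 }`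
for an `ℝ≥0∞`-valued sequence (indexed by `b (k+1)`, `k : ℕ`). -/
noncomputable def gpNormE (b : ℕ → ℝ≥0∞) : ℝ :=
  (1 / 2) * sInf {l : ℝ | 0 < l ∧ ∑' k : ℕ, b (k + 1) / ENNReal.ofReal (l ^ (k + 1)) ≤ 1}

/-!
With `√(CT) = 1/(2AM)`, the `j`-th summand of `b_k / (8AM)^k` is exactly
`k / (A 4^k) · a_{k+j+1} / (2M)^{k+j+1}`. Since `k ≤ 2^k` and `A ≥ 1`, the prefactor is at most
`2^{-k}`, and the remaining sum over `j` is a tail of the normalised series `∑ a_ℓ/(2M)^ℓ ≤ 1`.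
Summing `2^{-k}` over `k ≥ 1` gives `1`, so `λ = 8AM` is admissible in the infimum defining `N`.
-/

lemma sqrt_one_div_four_mul_sq_mul_sq {A M : ℝ} (hAM : 0 ≤ A * M) :
    Real.sqrt (1 / (4 * A ^ 2 * M ^ 2)) = (2 * A * M)⁻¹ := by
  rw [show 1 / (4 * A ^ 2 * M ^ 2) = ((2 * A * M)⁻¹) ^ 2 by field_simp; ring]
  exact Real.sqrt_sq (inv_nonneg.mpr (by linarith))

lemma natCast_mul_ofReal_inv_mul_four_pow_le {A : ℝ} (hA : 1 ≤ A) (n : ℕ) :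
    (n : ℝ≥0∞) * ENNReal.ofReal (A * 4 ^ n)⁻¹ ≤ 2⁻¹ ^ n := by
  rw [← ENNReal.ofReal_natCast, ← ENNReal.ofReal_mul n.cast_nonneg, ← ENNReal.ofReal_ofNat 2,
    ← ENNReal.ofReal_inv_of_pos two_pos, ← ENNReal.ofReal_pow (by norm_num)]
  apply ENNReal.ofReal_le_ofReal
  calc (n : ℝ) * (A * 4 ^ n)⁻¹ ≤ 2 ^ n * (1 * 4 ^ n)⁻¹ := by
        gcongr
        exact_mod_cast n.lt_two_pow_self.le
    _ = 2⁻¹ ^ n := by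
        rw [one_mul, show (4 : ℝ) = 2 * 2 by norm_num, mul_pow, mul_inv,
          mul_inv_cancel_left₀ (by positivity), inv_pow]

lemma natCast_mul_tsum_div_eight_pow_le {A M : ℝ} (hA : 1 ≤ A) (hM : 0 < M) (a : ℕ → ℝ) (n : ℕ) :
    (n : ℝ≥0∞) * (∑' j : ℕ, ENNReal.ofReal (A ^ (n + j) * (2 * A * M)⁻¹ ^ (j + 1) * a (n + j + 1)))
        / ENNReal.ofReal ((8 * A * M) ^ n)
      ≤ 2⁻¹ ^ n * ∑' l : ℕ, ENNReal.ofReal (a (l + 1) / (2 * M) ^ (l + 1)) := by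
  have hA0 : 0 < A := one_pos.trans_le hA
  have hM0 : M ≠ 0 := hM.ne'
  have summand_eq : ∀ j : ℕ,
      ENNReal.ofReal (A ^ (n + j) * (2 * A * M)⁻¹ ^ (j + 1) * a (n + j + 1))
          / ENNReal.ofReal ((8 * A * M) ^ n)
        = ENNReal.ofReal (A * 4 ^ n)⁻¹ * ENNReal.ofReal (a (n + j + 1) / (2 * M) ^ (n + j + 1)) := by
    intro j
    rw [← ENNReal.ofReal_div_of_pos (by positivity), ← ENNReal.ofReal_mul (by positivity)]
    congr 1
    rw [show (8 : ℝ) = 4 * 2 by norm_num]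
    simp only [inv_pow, pow_add, mul_pow]
    field_simp
  rw [mul_div_assoc, div_eq_mul_inv, ← ENNReal.tsum_mul_right]
  simp_rw [← div_eq_mul_inv, summand_eq, ENNReal.tsum_mul_left, ← mul_assoc]
  exact mul_le_mul' (natCast_mul_ofReal_inv_mul_four_pow_le hA n)
    (ENNReal.tsum_comp_le_tsum_of_injective (add_right_injective n)
      fun l => ENNReal.ofReal (a (l + 1) / (2 * M) ^ (l + 1)))

lemma ENNReal.tsum_two_inv_pow_succ : ∑' k : ℕ, (2⁻¹ : ℝ≥0∞) ^ (k + 1) = 1 := by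
  rw [ENNReal.tsum_geometric_add_one, ENNReal.one_sub_inv_two, inv_inv,
    ENNReal.inv_mul_cancel two_ne_zero ENNReal.ofNat_ne_top]

lemma gpNormE_le_half {b : ℕ → ℝ≥0∞} {l : ℝ} (hl : 0 < l)
    (h : ∑' k : ℕ, b (k + 1) / ENNReal.ofReal (l ^ (k + 1)) ≤ 1) : gpNormE b ≤ l / 2 := by
  have hInf : sInf {l : ℝ | 0 < l ∧ ∑' k : ℕ, b (k + 1) / ENNReal.ofReal (l ^ (k + 1)) ≤ 1} ≤ l :=
    csInf_le ⟨0, fun _ hx => hx.1.le⟩ ⟨hl, h⟩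
  unfold gpNormE
  linarith

theorem stmt11_general (A M : ℝ) (hA : 2 < A) (hM : 0 < M) (a : ℕ → ℝ)
    (hsum : ∑' l : ℕ, ENNReal.ofReal (a (l + 1) / (2 * M) ^ (l + 1)) ≤ 1)
    (b : ℕ → ℝ≥0∞)
    (hb : ∀ k : ℕ, b k = (k : ℝ≥0∞) *
      ∑' j : ℕ, ENNReal.ofReal (A ^ (k + j) * Real.sqrt (1 / (4 * A ^ 2 * M ^ 2)) ^ (j + 1)
        * a (k + j + 1))) :
    (∑' k : ℕ, b (k + 1) / ENNReal.ofReal ((8 * A * M) ^ (k + 1)) ≤ 1) ∧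
    gpNormE b ≤ 4 * A * M := by
  have hA1 : 1 ≤ A := by linarith
  have hsqrt := sqrt_one_div_four_mul_sq_mul_sq (by positivity : 0 ≤ A * M)
  have admissible : ∑' k : ℕ, b (k + 1) / ENNReal.ofReal ((8 * A * M) ^ (k + 1)) ≤ 1 :=
    calc ∑' k : ℕ, b (k + 1) / ENNReal.ofReal ((8 * A * M) ^ (k + 1))
        ≤ ∑' k : ℕ, 2⁻¹ ^ (k + 1) * 1 := ENNReal.tsum_le_tsum fun k => by
          rw [hb, hsqrt]
          exact (natCast_mul_tsum_div_eight_pow_le hA1 hM a (k + 1)).trans (by gcongr)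
      _ = 1 := by simp_rw [mul_one, ENNReal.tsum_two_inv_pow_succ]
  exact ⟨admissible, (gpNormE_le_half (by positivity) admissible).trans_eq (by ring)⟩

/-- Let `M > 0`, `A > 2`, and `(a_ℓ)_{ℓ≥1}` nonnegative with
`∑_ℓ a_ℓ/(2M)^ℓ ≤ 1`.  With `CT := 1/(4A²M²)` define
`b_k := k · ∑_{j=0}^∞ A^{k+j} (√(CT))^{j+1} a_{k+j+1}`.  Then
`∑_{k≥1} b_k/(8AM)^k ≤ 1`, and consequently `N((b_k)) ≤ 4AM`.
(Sums are taken in `ℝ≥0∞`; all terms are nonnegative.) -/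
theorem stmt11 (A M : ℝ) (hA : 2 < A) (hM : 0 < M) (a : ℕ → ℝ) (ha : ∀ l, 0 ≤ a l)
    (hsum : ∑' l : ℕ, ENNReal.ofReal (a (l + 1) / (2 * M) ^ (l + 1)) ≤ 1)
    (b : ℕ → ℝ≥0∞)
    (hb : ∀ k : ℕ, b k = (k : ℝ≥0∞) *
      ∑' j : ℕ, ENNReal.ofReal (A ^ (k + j) * Real.sqrt (1 / (4 * A ^ 2 * M ^ 2)) ^ (j + 1)
        * a (k + j + 1))) :
    (∑' k : ℕ, b (k + 1) / ENNReal.ofReal ((8 * A * M) ^ (k + 1)) ≤ 1) ∧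
    gpNormE b ≤ 4 * A * M :=
  stmt11_general A M hA hM a hsum b hb
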